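/- arXiv:1407.0606 — 2 statements merged into one kernel-verified Lean document; each statement's English description precedes it below -/
import Mathlib

section
/- Let ω ∈ [-1,1] and λ ∈ ℂ. Define the 4×4 complex matrix M₀(λ,ω) = αJβ − ω αJ − αλ, where J = [[0, I₂],[−I₂, 0]], α = [[0, Im σ₂],[−Im σ₂, 0]], β = [[σ₃, 0],[0, σ₃]] (block 4×4 matrices built from the Pauli matrices). Then the spectrum of M₀(λ,ω) is {±√(1−(ω+iλ)²), ±√(1−(ω−iλ)²)}, i.e., z is an eigenvalue of M₀(λ,ω) if and only if z² − 1 + (iλ − ω)² = 0 or z² − 1 + (−iλ − ω)² = 0. -/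
open Matrix

/-- `Im σ₂ = [[0,-1],[1,0]]` (imaginary part of the Pauli matrix `σ₂`), over `ℂ`. -/
noncomputable def ImSigma2 : Matrix (Fin 2) (Fin 2) ℂ := !![0, -1; 1, 0]

/-- `σ₃ = [[1,0],[0,-1]]`, over `ℂ`. -/
noncomputable def Sigma3 : Matrix (Fin 2) (Fin 2) ℂ := !![1, 0; 0, -1]

/-- `J = [[0, I₂],[-I₂, 0]]` as a `4×4` block matrix. -/
noncomputable def Jmat : Matrix (Fin 2 ⊕ Fin 2) (Fin 2 ⊕ Fin 2) ℂ :=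
  Matrix.fromBlocks 0 1 (-1) 0

/-- `α = [[0, Im σ₂],[-Im σ₂, 0]]` as a `4×4` block matrix. -/
noncomputable def alphaMat : Matrix (Fin 2 ⊕ Fin 2) (Fin 2 ⊕ Fin 2) ℂ :=
  Matrix.fromBlocks 0 ImSigma2 (-ImSigma2) 0

/-- `β = diag(σ₃, σ₃)` as a `4×4` block matrix. -/
noncomputable def betaMat : Matrix (Fin 2 ⊕ Fin 2) (Fin 2 ⊕ Fin 2) ℂ :=
  Matrix.fromBlocks Sigma3 0 0 Sigma3

/-- `M₀(λ,ω) = αJβ − ω·αJ − λ·α`. -/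
noncomputable def M0 (lam : ℂ) (om : ℝ) : Matrix (Fin 2 ⊕ Fin 2) (Fin 2 ⊕ Fin 2) ℂ :=
  alphaMat * Jmat * betaMat - (om : ℂ) • (alphaMat * Jmat) - lam • alphaMat

/-!
`M₀(λ,ω) − z` has the block form `[[A, B], [−B, A]]`, and eliminating with the unit
block-triangular matrices `[[1, 0], [±i, 1]]` shows that its determinant is
`det (A − iB) · det (A + iB)`. Each factor is a `2 × 2` determinant equal to one of the two
quadratics `z² − 1 + (±iλ − ω)²`.
-/

theorem det_fromBlocks_neg_eq {R n : Type*} [CommRing R] [Fintype n] [DecidableEq n]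
    (i : R) (hi : i * i = -1) (A B : Matrix n n R) :
    (fromBlocks A B (-B) A).det = (A - i • B).det * (A + i • B).det := by
  have htri : fromBlocks 1 0 (i • 1) 1 * fromBlocks A B (-B) A * fromBlocks 1 0 (-i • 1) 1 =
      fromBlocks (A - i • B) B 0 (A + i • B) := by
    simp only [fromBlocks_multiply]
    congr 1 <;> simp [smul_smul, hi, sub_eq_add_neg] <;> abel
  simpa [det_mul, det_fromBlocks_zero₁₂, det_fromBlocks_zero₂₁] using congrArg det htri

theorem det_fin_two_add_smul {R : Type*} [CommRing R] (z w lam c : R) :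
    (!![-z, -(1 + w); w - 1, -z] + c • !![0, lam; -lam, 0]).det = z ^ 2 - 1 + (c * lam - w) ^ 2 := by
  simp [det_fin_two]
  ring

theorem M0_sub_smul_one (lam z : ℂ) (om : ℝ) :
    M0 lam om - z • (1 : Matrix (Fin 2 ⊕ Fin 2) (Fin 2 ⊕ Fin 2) ℂ) =
      fromBlocks !![-z, -(1 + om); om - 1, -z] !![0, lam; -lam, 0]
        (-!![0, lam; -lam, 0]) !![-z, -(1 + om); om - 1, -z] := by
  simp only [M0, alphaMat, Jmat, betaMat, fromBlocks_multiply, ← fromBlocks_one, fromBlocks_smul,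
    sub_eq_add_neg, fromBlocks_neg, fromBlocks_add]
  congr 1 <;> ext i j <;> fin_cases i <;> fin_cases j <;> simp [ImSigma2, Sigma3] <;> ring

theorem stmt2_general (om : ℝ) (lam z : ℂ) :
    (M0 lam om - z • (1 : Matrix (Fin 2 ⊕ Fin 2) (Fin 2 ⊕ Fin 2) ℂ)).det = 0 ↔
      (z ^ 2 - 1 + (Complex.I * lam - om) ^ 2 = 0 ∨
       z ^ 2 - 1 + (-(Complex.I * lam) - om) ^ 2 = 0) := by
  rw [M0_sub_smul_one, det_fromBlocks_neg_eq Complex.I Complex.I_mul_I, sub_eq_add_neg, ← neg_smul,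
    det_fin_two_add_smul, det_fin_two_add_smul, neg_mul, mul_eq_zero, or_comm]

/-- for `ω ∈ [-1,1]` and `λ ∈ ℂ`, the spectrum of `M₀(λ,ω)` is
`{±√(1−(ω+iλ)²), ±√(1−(ω−iλ)²)}`: `z` is an eigenvalue of `M₀(λ,ω)`
(i.e. `det (M₀(λ,ω) − z·I) = 0`) iff `z² − 1 + (iλ − ω)² = 0` or `z² − 1 + (−iλ − ω)² = 0`. -/
theorem stmt2 (om : ℝ) (hom : om ∈ Set.Icc (-1 : ℝ) 1) (lam z : ℂ) :
    (M0 lam om - z • (1 : Matrix (Fin 2 ⊕ Fin 2) (Fin 2 ⊕ Fin 2) ℂ)).det = 0 ↔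
      (z ^ 2 - 1 + (Complex.I * lam - om) ^ 2 = 0 ∨
       z ^ 2 - 1 + (-(Complex.I * lam) - om) ^ 2 = 0) :=
  stmt2_general om lam z
end

section
/- With J, α, β the 4×4 matrices as above, the matrices J, α, β satisfy: J commutes with β-conjugation in the sense that for the matrix M₀(λ,ω) = αJβ − ωαJ − αλ, one has det(M₀(λ,ω) − z·I₄)² = det((Jλ − ω·I₄ + αJz + β)·αβ·(Jλ − ω·I₄ + αJz + β)·βα) = det((Jλ−ω)² − (1 − z²)·I₄). In particular, det(M₀(λ,ω) − z) = 0 iff det((Jλ−ω)² − (1−z²)) = 0. -/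
/-!
Since `J` commutes with `α` and `β`, `(αJ)² = -1`, so `M₀(λ,ω) - z = αJ · N` with
`N = K + P`, `K = λJ - ω`, `P = zαJ + β`, and `det (αJ) = 1`. Conjugation by `αβ` (inverse `βα`)
fixes `J` and negates `α` and `β`, turning `N` into `K - P`; as `K` and `P` commute and
`P² = 1 - z²` (because `α` and `β` anticommute), `N · αβ · N · βα = K² - (1 - z²)`.
-/

open Matrix

section

variable {R A : Type*} [CommRing R] [Ring A] [Algebra R A] {j a b : A}

theorem mul_self_eq_neg_one_of_commute (hj : j * j = -1) (ha : a * a = 1) (hja : Commute j a) :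
    a * j * (a * j) = -1 := by
  rw [hja.mul_mul_mul_comm, ha, hj, one_mul]

theorem sub_smul_one_eq_mul (hj : j * j = -1) (ha : a * a = 1) (hja : Commute j a)
    (lam om z : R) :
    a * j * b - om • (a * j) - lam • a - z • (1 : A) =
      a * j * (lam • j - om • 1 + z • (a * j) + b) := by
  have haja : a * j * j = -a := by rw [mul_assoc, hj, mul_neg_one]
  simp only [mul_add, mul_sub, mul_smul_comm, mul_self_eq_neg_one_of_commute hj ha hja, haja,
    mul_one, smul_neg]
  abel

theorem mul_mul_mul_eq_sub (ha : a * a = 1) (hb : b * b = 1) (hab : a * b = -(b * a))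
    (hja : Commute j a) (hjb : Commute j b) (lam om z : R) :
    a * b * (lam • j - om • 1 + (z • (a * j) + b)) * (b * a) =
      lam • j - om • 1 - (z • (a * j) + b) := by
  have hinv : a * b * (b * a) = 1 := by
    rw [mul_assoc, ← mul_assoc b, hb, one_mul, ha]
  have hconj_j : a * b * j * (b * a) = j := by
    rw [← (hja.mul_right hjb).eq, mul_assoc, hinv, mul_one]
  have hconj_a : a * b * a * (b * a) = -a := by
    rw [hab, neg_mul, neg_mul, mul_assoc b, ha, mul_one, ← mul_assoc, hb, one_mul]
  have hconj_b : a * b * b * (b * a) = -b := by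
    rw [mul_assoc a, hb, mul_one, ← mul_assoc, hab, neg_mul, mul_assoc, ha, mul_one]
  have hconj_aj : a * b * (a * j) * (b * a) = -(a * j) := by
    calc a * b * (a * j) * (b * a) = a * b * a * (j * (b * a)) := by simp only [mul_assoc]
      _ = a * b * a * (b * a) * j := by
        rw [(hjb.mul_right hja).eq]; simp only [mul_assoc]
      _ = -(a * j) := by rw [hconj_a, neg_mul]
  simp only [mul_add, add_mul, mul_sub, sub_mul, mul_smul_comm, smul_mul_assoc, mul_one,
    hinv, hconj_j, hconj_b, hconj_aj, smul_neg]
  abel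

theorem mul_conj_eq_sq_sub (hj : j * j = -1) (ha : a * a = 1) (hb : b * b = 1)
    (hab : a * b = -(b * a)) (hja : Commute j a) (hjb : Commute j b) (lam om z : R) :
    (lam • j - om • 1 + z • (a * j) + b) * (a * b) * (lam • j - om • 1 + z • (a * j) + b) *
        (b * a) = (lam • j - om • 1) ^ 2 - (1 - z ^ 2) • 1 := by
  have hconj := mul_mul_mul_eq_sub ha hb hab hja hjb lam om z
  rw [add_assoc]
  set K := lam • j - om • (1 : A)
  set P := z • (a * j) + b
  have hKP : Commute K P :=
    have hjP : Commute j P := ((hja.mul_right (Commute.refl j)).smul_right z).add_right hjb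
    (hjP.smul_left lam).sub_left ((Commute.one_left P).smul_left om)
  have hP : P * P = (1 - z ^ 2) • 1 := by
    have hanti : a * j * b + b * (a * j) = 0 := by
      rw [mul_assoc, hjb.eq, ← mul_assoc, ← mul_assoc, ← add_mul, hab, neg_add_cancel, zero_mul]
    simp only [P, mul_add, add_mul, mul_smul_comm, smul_mul_assoc,
      mul_self_eq_neg_one_of_commute hj ha hja, hb]
    rw [eq_neg_of_add_eq_zero_right hanti]
    module
  calc (K + P) * (a * b) * (K + P) * (b * a) = (K + P) * (K - P) := by
        rw [← hconj]; simp only [mul_assoc]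
    _ = K ^ 2 - (1 - z ^ 2) • 1 := by
        rw [add_mul K P, mul_sub K K P, mul_sub P K P, hKP.eq, hP, sq K]; abel

end

theorem ImSigma2_mul_self : ImSigma2 * ImSigma2 = -1 := by
  simp [ImSigma2, one_fin_two]

theorem Sigma3_mul_self : Sigma3 * Sigma3 = 1 := by
  simp [Sigma3, one_fin_two]

theorem ImSigma2_mul_Sigma3 : ImSigma2 * Sigma3 = -(Sigma3 * ImSigma2) := by
  simp [ImSigma2, Sigma3]

theorem Jmat_mul_self : Jmat * Jmat = -1 := by
  simp [Jmat, fromBlocks_multiply, ← fromBlocks_one, fromBlocks_neg]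

theorem alphaMat_mul_self : alphaMat * alphaMat = 1 := by
  simp [alphaMat, fromBlocks_multiply, ImSigma2_mul_self, ← fromBlocks_one]

theorem betaMat_mul_self : betaMat * betaMat = 1 := by
  simp [betaMat, fromBlocks_multiply, Sigma3_mul_self, ← fromBlocks_one]

theorem alphaMat_mul_betaMat : alphaMat * betaMat = -(betaMat * alphaMat) := by
  simp [alphaMat, betaMat, fromBlocks_multiply, fromBlocks_neg, ImSigma2_mul_Sigma3]

theorem commute_Jmat_alphaMat : Commute Jmat alphaMat := by
  simp [Commute, SemiconjBy, Jmat, alphaMat, fromBlocks_multiply]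

theorem commute_Jmat_betaMat : Commute Jmat betaMat := by
  simp [Commute, SemiconjBy, Jmat, betaMat, fromBlocks_multiply]

theorem det_alphaMat_mul_Jmat : (alphaMat * Jmat).det = 1 := by
  simp [alphaMat, Jmat, fromBlocks_multiply, det_fromBlocks_zero₂₁, ImSigma2, det_fin_two]

/-- the determinant identities
`det(M₀(λ,ω) − z·I)² = det((Jλ − ω + αJz + β)·αβ·(Jλ − ω + αJz + β)·βα)
 = det((Jλ − ω)² − (1 − z²)·I)`, and consequently
`det(M₀(λ,ω) − z) = 0 ↔ det((Jλ−ω)² − (1−z²)) = 0`. -/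
theorem stmt3 (om : ℝ) (lam z : ℂ) :
    ((M0 lam om - z • (1 : Matrix (Fin 2 ⊕ Fin 2) (Fin 2 ⊕ Fin 2) ℂ)).det) ^ 2
        = ((lam • Jmat - (om : ℂ) • 1 + z • (alphaMat * Jmat) + betaMat)
            * (alphaMat * betaMat)
            * (lam • Jmat - (om : ℂ) • 1 + z • (alphaMat * Jmat) + betaMat)
            * (betaMat * alphaMat)).det ∧
    ((M0 lam om - z • (1 : Matrix (Fin 2 ⊕ Fin 2) (Fin 2 ⊕ Fin 2) ℂ)).det) ^ 2
        = ((lam • Jmat - (om : ℂ) • 1) ^ 2 - (1 - z ^ 2) • 1).det ∧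
    ((M0 lam om - z • (1 : Matrix (Fin 2 ⊕ Fin 2) (Fin 2 ⊕ Fin 2) ℂ)).det = 0 ↔
      ((lam • Jmat - (om : ℂ) • 1) ^ 2 - (1 - z ^ 2) • 1).det = 0) := by
  set N := lam • Jmat - (om : ℂ) • 1 + z • (alphaMat * Jmat) + betaMat
  have hdet : (M0 lam om - z • 1).det = N.det := by
    rw [M0, sub_smul_one_eq_mul Jmat_mul_self alphaMat_mul_self commute_Jmat_alphaMat, det_mul,
      det_alphaMat_mul_Jmat, one_mul]
  have hdet_ab : (alphaMat * betaMat).det * (betaMat * alphaMat).det = 1 := by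
    rw [← det_mul, mul_assoc, ← mul_assoc betaMat, betaMat_mul_self, one_mul, alphaMat_mul_self,
      det_one]
  have h_conj : (M0 lam om - z • 1).det ^ 2 =
      (N * (alphaMat * betaMat) * N * (betaMat * alphaMat)).det := by
    rw [hdet, det_mul, det_mul, det_mul]
    linear_combination -N.det ^ 2 * hdet_ab
  have h_sq : (M0 lam om - z • 1).det ^ 2 =
      ((lam • Jmat - (om : ℂ) • 1) ^ 2 - (1 - z ^ 2) • 1).det := by
    rw [h_conj, mul_conj_eq_sq_sub Jmat_mul_self alphaMat_mul_self betaMat_mul_self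
      alphaMat_mul_betaMat commute_Jmat_alphaMat commute_Jmat_betaMat]
  exact ⟨h_conj, h_sq, by rw [← h_sq, pow_eq_zero_iff two_ne_zero]⟩
end
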